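/- For ζ a primitive m-th root of unity and α ≠ 0, the polynomial α^m(cx−ay)^{2m} + (dx−by)^{2m} is invariant under the substitution by T = M·diag(ζ,1)·M⁻¹ (up to the scalar (ad−bc)^{2m} coming from clearing denominators) where M = [[a,b],[c,d]]: precisely, substituting (x,y) ↦ ((adζ−bc)x + ab(1−ζ)y, cd(ζ−1)x + (ad−bcζ)y) into α^m(cx−ay)^{2m} + (dx−by)^{2m} yields (ad−bc)^{2m}·(α^m(cx−ay)^{2m} + (dx−by)^{2m}). -/
import Mathlib


open MvPolynomial

theorem stmt14 {k : Type*} [Field k] (m : ℕ) (a b c d α ζ : k)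
    (hdet : a * d - b * c ≠ 0) (hα : α ≠ 0) (hζ : IsPrimitiveRoot ζ m) :
    (C (α ^ m) *
        (C c * (C (a * d * ζ - b * c) * X 0 + C (a * b * (1 - ζ)) * X 1)
          - C a * (C (c * d * (ζ - 1)) * X 0 + C (a * d - b * c * ζ) * X 1)) ^ (2 * m)
      + (C d * (C (a * d * ζ - b * c) * X 0 + C (a * b * (1 - ζ)) * X 1)
          - C b * (C (c * d * (ζ - 1)) * X 0 + C (a * d - b * c * ζ) * X 1)) ^ (2 * m)
      : MvPolynomial (Fin 2) k)
    = C ((a * d - b * c) ^ (2 * m)) *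
        (C (α ^ m) * (C c * X 0 - C a * X 1) ^ (2 * m)
          + (C d * X 0 - C b * X 1) ^ (2 * m)) := by
  have hz : ζ ^ m = 1 := hζ.pow_eq_one
  have e1 : (C c * (C (a * d * ζ - b * c) * X 0 + C (a * b * (1 - ζ)) * X 1)
          - C a * (C (c * d * (ζ - 1)) * X 0 + C (a * d - b * c * ζ) * X 1)
          : MvPolynomial (Fin 2) k)
      = C (a * d - b * c) * (C c * X 0 - C a * X 1) := by
    simp only [C_sub, C_mul, C_1, map_one]
    ring
  have e2 : (C d * (C (a * d * ζ - b * c) * X 0 + C (a * b * (1 - ζ)) * X 1)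
          - C b * (C (c * d * (ζ - 1)) * X 0 + C (a * d - b * c * ζ) * X 1)
          : MvPolynomial (Fin 2) k)
      = C ζ * (C (a * d - b * c) * (C d * X 0 - C b * X 1)) := by
    simp only [C_sub, C_mul, C_1, map_one]
    ring
  have hzC : (C ζ : MvPolynomial (Fin 2) k) ^ (2 * m) = 1 := by
    rw [← C_pow, mul_comm 2 m, pow_mul, hz, one_pow, map_one]
  rw [e1, e2, mul_pow (C ζ), hzC, one_mul, mul_pow, mul_pow]
  simp only [C_pow]
  ring
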